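/- arXiv:2201.09425 — 4 statements merged into one kernel-verified Lean document; each statement's English description precedes it below -/
import Mathlib

section
/- Let C > 0 and let π_{S+}(x̃) be the Euclidean projection of x̃ ∈ ℝⁿ onto K_{S+} = {v ∈ ℝⁿ : ∑ᵢ vᵢ = C, v ≥ 0}. Then there exists a unique nonnegative scalar T such that ∑ᵢ max(π_S(x̃)ᵢ − T, 0) = C and π_{S+}(x̃) = max(π_S(x̃) − T·1, 0) componentwise, where π_S(x̃)ᵢ = x̃ᵢ + (C − ∑ⱼ x̃ⱼ)/n. -/
/-!
Moving a small mass `ε` from a coordinate `j` with `p j > 0` to another coordinate `i` keeps `p`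
in `K_{S+}` and changes the squared distance to `x` by `2ε((p i - x i) - (p j - x j)) + 2ε²`, so
minimality forces `x i - p i ≤ x j - p j`. Hence `x j - p j` takes a single value `T` on the
support of `p` and dominates `x i - p i` off it, which says `p = max (x - T) 0`; translating `x`
by the constant vector that defines `y = π_S(x)` does not affect this. The level function
`T ↦ ∑ i, max (y i - T) 0` strictly decreases wherever it is positive, which gives uniqueness,
and `T ≥ 0` because `∑ i, y i = C = ∑ i, max (y i - T) 0 ≥ ∑ i, (y i - T)`.
-/

open Finset

section WaterFilling

variable {ι : Type*}

lemma eq_max_sub_of_sub_le_sub {y p : ι → ℝ} (hp0 : ∀ i, 0 ≤ p i)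
    (h : ∀ i j, 0 < p j → y i - p i ≤ y j - p j) {j : ι} (hpj : 0 < p j) (i : ι) :
    p i = max (y i - (y j - p j)) 0 := by
  have hij := h i j hpj
  rcases (hp0 i).lt_or_eq with hpi | hpi
  · have hji := h j i hpi
    rw [max_eq_left (by linarith)]
    linarith
  · rw [← hpi, max_eq_right (by linarith)]

variable [Fintype ι]

lemma sum_sq_add_single_sub_single [DecidableEq ι] {i j : ι} (hij : i ≠ j) (p x : ι → ℝ) (ε : ℝ) :
    ∑ k, ((p + Pi.single i ε - Pi.single j ε : ι → ℝ) k - x k) ^ 2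
      = ∑ k, (p k - x k) ^ 2 + 2 * ε * ((p i - x i) - (p j - x j)) + 2 * ε ^ 2 := by
  have hk : ∀ k, ((p + Pi.single i ε - Pi.single j ε : ι → ℝ) k - x k) ^ 2
      = (p k - x k) ^ 2
        + 2 * ε * ((if k = i then p i - x i else 0) - (if k = j then p j - x j else 0))
        + ε ^ 2 * ((if k = i then 1 else 0) + (if k = j then 1 else 0)) := by
    intro k
    by_cases hi : k = i <;> by_cases hj : k = j
    · exact absurd (hi.symm.trans hj) hij
    all_goals simp [hi, hj, hij, hij.symm]; try ring
  simp only [hk, sum_add_distrib, ← mul_sum, sum_sub_distrib, sum_ite_eq', mem_univ, if_true]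
  ring

lemma sub_le_sub_of_forall_sum_sq_le {C : ℝ} {x p : ι → ℝ} (hpK : ∑ i, p i = C)
    (hp0 : ∀ i, 0 ≤ p i)
    (hmin : ∀ v : ι → ℝ, ∑ i, v i = C → (∀ i, 0 ≤ v i) →
      ∑ i, (p i - x i) ^ 2 ≤ ∑ i, (v i - x i) ^ 2)
    (i : ι) {j : ι} (hpj : 0 < p j) : x i - p i ≤ x j - p j := by
  classical
  rcases eq_or_ne i j with rfl | hij
  · rfl
  by_contra! hlt
  set a := (p i - x i) - (p j - x j)
  set ε := min (p j) (-a / 2)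
  have hε : 0 < ε := lt_min hpj (by linarith)
  have hεj : ε ≤ p j := min_le_left _ _
  have hεa : ε ≤ -a / 2 := min_le_right _ _
  set v : ι → ℝ := p + Pi.single i ε - Pi.single j ε
  have hv : ∑ k, v k = C := by
    simp [v, sum_add_distrib, sum_sub_distrib, hpK]
  have hv0 : ∀ k, 0 ≤ v k := by
    intro k
    by_cases hi : k = i <;> by_cases hj : k = j
    · exact absurd (hi.symm.trans hj) hij
    all_goals simp [v, hi, hj, hij, hij.symm]
    all_goals linarith [hp0 i, hp0 k]
  have := hmin v hv hv0
  rw [sum_sq_add_single_sub_single hij] at this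
  nlinarith

lemma nonneg_of_sum_max_sub_eq_sum [Nonempty ι] {y : ι → ℝ} {T : ℝ}
    (h : ∑ i, max (y i - T) 0 = ∑ i, y i) : 0 ≤ T := by
  have hle : ∑ i, (y i - T) ≤ ∑ i, max (y i - T) 0 :=
    sum_le_sum fun i _ => le_max_left _ _
  rw [h, sum_sub_distrib, sum_const, card_univ, nsmul_eq_mul] at hle
  have : (0 : ℝ) < Fintype.card ι := by exact_mod_cast Fintype.card_pos
  nlinarith

lemma sum_max_sub_lt_of_lt {y : ι → ℝ} {A B : ℝ} (hAB : A < B)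
    (hA : 0 < ∑ i, max (y i - A) 0) : ∑ i, max (y i - B) 0 < ∑ i, max (y i - A) 0 := by
  obtain ⟨i, -, hi⟩ := exists_lt_of_sum_lt (f := fun _ => (0 : ℝ)) (by simpa using hA)
  have hiA : 0 < y i - A := (lt_max_iff.mp hi).resolve_right (lt_irrefl 0)
  refine sum_lt_sum (fun k _ => max_le_max (by linarith) le_rfl) ⟨i, mem_univ i, ?_⟩
  rw [max_eq_left hiA.le]
  exact max_lt (by linarith) hiA

lemma eq_of_sum_max_sub_eq {y : ι → ℝ} {A B C : ℝ} (hC : 0 < C)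
    (hA : ∑ i, max (y i - A) 0 = C) (hB : ∑ i, max (y i - B) 0 = C) : A = B := by
  rcases lt_trichotomy A B with hAB | rfl | hBA
  · exact absurd (hB.trans hA.symm) (sum_max_sub_lt_of_lt hAB (hA ▸ hC)).ne
  · rfl
  · exact absurd (hA.trans hB.symm) (sum_max_sub_lt_of_lt hBA (hB ▸ hC)).ne

lemma sum_add_sub_sum_div_card {n : ℕ} (hn : n ≠ 0) (x : Fin n → ℝ) (C : ℝ) :
    ∑ i, (x i + (C - ∑ j, x j) / n) = C := by
  have : (n : ℝ) ≠ 0 := Nat.cast_ne_zero.mpr hn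
  rw [sum_add_distrib, sum_const, card_fin, nsmul_eq_mul]
  field_simp
  ring

end WaterFilling

theorem stmt4_general (n : ℕ) (C : ℝ) (hC : 0 < C) (xt p : Fin n → ℝ)
    (hpK : ∑ i, p i = C) (hp0 : ∀ i, 0 ≤ p i)
    (hmin : ∀ v : Fin n → ℝ, ∑ i, v i = C → (∀ i, 0 ≤ v i) →
      ∑ i, (p i - xt i) ^ 2 ≤ ∑ i, (v i - xt i) ^ 2) :
    ∃ T : ℝ, 0 ≤ T ∧
      (∑ i, max (xt i + (C - ∑ j, xt j) / n - T) 0 = C) ∧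
      (∀ i, p i = max (xt i + (C - ∑ j, xt j) / n - T) 0) ∧
      (∀ T' : ℝ, 0 ≤ T' →
        (∑ i, max (xt i + (C - ∑ j, xt j) / n - T') 0 = C) → T' = T) := by
  set y : Fin n → ℝ := fun i => xt i + (C - ∑ j, xt j) / n
  obtain ⟨j, -, hpj⟩ : ∃ j ∈ univ, (0 : Fin n → ℝ) j < p j :=
    exists_lt_of_sum_lt (by simpa [hpK] using hC)
  have : Nonempty (Fin n) := ⟨j⟩
  have hexch : ∀ i j, 0 < p j → y i - p i ≤ y j - p j := fun i j hpj => by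
    have := sub_le_sub_of_forall_sum_sq_le hpK hp0 hmin i hpj
    simp only [y]
    linarith
  have hrep := eq_max_sub_of_sub_le_sub hp0 hexch hpj
  have hsum : ∑ i, max (y i - (y j - p j)) 0 = C := by
    simp_rw [← hrep]
    exact hpK
  have hT : 0 ≤ y j - p j :=
    nonneg_of_sum_max_sub_eq_sum (hsum.trans (sum_add_sub_sum_div_card j.pos.ne' xt C).symm)
  exact ⟨y j - p j, hT, hsum, hrep, fun T' _ hT' => eq_of_sum_max_sub_eq hC hT' hsum⟩

/-- Water-filling representation of the projection onto `{v : ∑ v = C, v ≥ 0}`: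
there is a unique nonnegative threshold `T` with `∑ i, max (π_S(xt) i - T) 0 = C`,
and the projection equals `max (π_S(xt) - T·1) 0` componentwise,
where `π_S(xt) i = xt i + (C - ∑ j, xt j)/n`. -/
theorem stmt4 (n : ℕ) (hn : 1 ≤ n) (C : ℝ) (hC : 0 < C) (xt p : Fin n → ℝ)
    (hpK : ∑ i, p i = C) (hp0 : ∀ i, 0 ≤ p i)
    (hmin : ∀ v : Fin n → ℝ, ∑ i, v i = C → (∀ i, 0 ≤ v i) →
      ∑ i, (p i - xt i) ^ 2 ≤ ∑ i, (v i - xt i) ^ 2) :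
    ∃ T : ℝ, 0 ≤ T ∧
      (∑ i, max (xt i + (C - ∑ j, xt j) / n - T) 0 = C) ∧
      (∀ i, p i = max (xt i + (C - ∑ j, xt j) / n - T) 0) ∧
      (∀ T' : ℝ, 0 ≤ T' →
        (∑ i, max (xt i + (C - ∑ j, xt j) / n - T') 0 = C) → T' = T) :=
  stmt4_general n C hC xt p hpK hp0 hmin
end

section
/- With notation as in the simplex-with-sum projection: for any x̃ ∈ ℝⁿ, the scalar T(π_S(x̃)) satisfying ∑ᵢ max(π_S(x̃)ᵢ − T, 0) = C with C > 0 obeys T(π_S(x̃)) ≤ ∑ᵢ max(−π_S(x̃)ᵢ, 0), i.e., T is bounded by the total negative part of π_S(x̃). -/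
/-!
Write `y = π_S(x̃)`, so `∑ yᵢ = C`. Since `(T - a)⁺ = (a - T)⁺ - (a - T)`, the defining equation
of `T` gives `∑ (T - yᵢ)⁺ = n T`. As `C > 0`, some `yᵢ` exceeds `T`, so its term vanishes, while
every other term is at most `T + (yⱼ)₋`; hence `n T ≤ (n - 1) T + ∑ (yⱼ)₋`.
-/

open Finset

section WaterFilling

variable {ι : Type*} [Fintype ι]

theorem sum_add_div_card_sub_sum [Nonempty ι] (x : ι → ℝ) (C : ℝ) :
    ∑ i, (x i + (C - ∑ j, x j) / Fintype.card ι) = C := by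
  have hcard : (Fintype.card ι : ℝ) ≠ 0 := Nat.cast_ne_zero.2 Fintype.card_ne_zero
  rw [sum_add_distrib, sum_const, card_univ, nsmul_eq_mul, mul_div_cancel₀ _ hcard]
  ring

theorem sum_max_sub_zero_eq (y : ι → ℝ) (T : ℝ) :
    ∑ i, max (T - y i) 0 = ∑ i, max (y i - T) 0 - ∑ i, y i + Fintype.card ι * T := by
  have h (a : ℝ) : max (T - a) 0 = max (a - T) 0 - (a - T) := by
    have := max_zero_sub_max_neg_zero_eq_self (a - T)
    rw [neg_sub] at this
    linarith
  simp only [h, sum_sub_distrib, sum_const, card_univ, nsmul_eq_mul]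
  ring

theorem exists_lt_of_sum_max_sub_zero_pos {y : ι → ℝ} {T : ℝ}
    (h : 0 < ∑ i, max (y i - T) 0) : ∃ i, T < y i := by
  contrapose! h
  exact sum_nonpos fun i _ => max_le (sub_nonpos.2 (h i)) le_rfl

theorem sum_max_sub_zero_add_le {y : ι → ℝ} {T : ℝ} (hT : 0 ≤ T) {i : ι} (hi : T < y i) :
    ∑ j, max (T - y j) 0 + T ≤ Fintype.card ι * T + ∑ j, max (-y j) 0 := by
  classical
  have h_le (a : ℝ) : max (T - a) 0 ≤ T + max (-a) 0 := by
    simpa [max_eq_left hT, sub_eq_add_neg] using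
      (max_add_add_le_max_add_max (a := T) (b := -a) (c := 0) (d := 0))
  calc ∑ j, max (T - y j) 0 + T = T + ∑ j ∈ {i}ᶜ, max (T - y j) 0 := by
        rw [Fintype.sum_eq_add_sum_compl i, max_eq_right (by linarith)]; ring
    _ ≤ (T + max (-y i) 0) + ∑ j ∈ {i}ᶜ, (T + max (-y j) 0) := by
        gcongr with j
        · exact le_add_of_nonneg_right (le_max_right _ _)
        · exact h_le (y j)
    _ = Fintype.card ι * T + ∑ j, max (-y j) 0 := by
        rw [← Fintype.sum_eq_add_sum_compl i (fun j => T + max (-y j) 0), sum_add_distrib,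
          sum_const, card_univ, nsmul_eq_mul]

end WaterFilling

/-- The water-filling threshold `T` for `π_S(xt)` is bounded by the total negative
part of `π_S(xt)`, where `π_S(xt) i = xt i + (C - ∑ j, xt j)/n`. -/
theorem stmt5 (n : ℕ) (C : ℝ) (hC : 0 < C) (xt : Fin n → ℝ) (T : ℝ) (hT : 0 ≤ T)
    (hTeq : ∑ i, max (xt i + (C - ∑ j, xt j) / n - T) 0 = C) :
    T ≤ ∑ i, max (-(xt i + (C - ∑ j, xt j) / n)) 0 := by
  set y : Fin n → ℝ := fun i => xt i + (C - ∑ j, xt j) / n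
  obtain ⟨i, hi⟩ := exists_lt_of_sum_max_sub_zero_pos (hTeq ▸ hC)
  have : Nonempty (Fin n) := ⟨i⟩
  have hsum : ∑ i, y i = C := by simpa using sum_add_div_card_sub_sum xt C
  have hcount := sum_max_sub_zero_eq y T
  have hbound := sum_max_sub_zero_add_le (y := y) hT hi
  rw [hTeq, hsum, Fintype.card_fin] at hcount
  rw [Fintype.card_fin] at hbound
  linarith
end

section
/- Let ν ∼ N(0, a⁻²) be a one-dimensional Gaussian with a > 0. For any real x, E[max(x + ν, 0)] − x = ∫_{−∞}^{−x} Φ(at) dt, where Φ is the standard normal CDF. Consequently, for x₁ ≤ xₙ, (E[max(x₁+ν,0)] − x₁) − (E[max(xₙ+ν,0)] − xₙ) = ∫_{−xₙ}^{−x₁} Φ(at) dt, and this quantity lies in [Φ(−a xₙ)(xₙ − x₁), Φ(−a x₁)(xₙ − x₁)]. -/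
open MeasureTheory

/-- The standard normal cumulative distribution function. -/
noncomputable def stdNormalCDF (t : ℝ) : ℝ :=
  ∫ s in Set.Iic t, Real.exp (-(s ^ 2) / 2) / Real.sqrt (2 * Real.pi)

/-- `E[max (x + ν) 0]` for `ν ~ N(0, a⁻²)`, written against the Gaussian density. -/
noncomputable def gaussPlusExp (a x : ℝ) : ℝ :=
  ∫ ν : ℝ, max (x + ν) 0 * (a / Real.sqrt (2 * Real.pi) * Real.exp (-(a ^ 2 * ν ^ 2) / 2))

/-!
For a standard normal `Z` with density `φ` and distribution function `Φ`, splitting at `u = -y`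
and using `∫_c^∞ u φ(u) du = φ(c)` gives `E[max (y + Z) 0] = H(y) := y Φ(y) + φ(y)`. Since
`H' = Φ` and `H → 0` at `-∞` (as `Φ(t) ≤ eᵗ`), also `∫_{-∞}^b Φ = H(b)`, and the symmetry
`Φ(-y) = 1 - Φ(y)` gives `H(y) - y = H(-y)`. The substitution `ν = Z / a` turns both sides of
the identity into `a⁻¹ H(-a x)`. The difference of two such identities is an integral over
`[-xₙ, -x₁]`, bounded by monotonicity of `t ↦ Φ(a t)`.
-/

open Set Filter Real Topology ProbabilityTheory

lemma Monotone.mul_sub_le_intervalIntegral {f : ℝ → ℝ} (hf : Monotone f) {u v : ℝ}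
    (huv : u ≤ v) : f u * (v - u) ≤ ∫ t in u..v, f t := by
  have h := intervalIntegral.integral_mono_on huv intervalIntegrable_const
    (hf.intervalIntegrable (μ := volume)) fun t ht => hf ht.1
  rwa [intervalIntegral.integral_const, smul_eq_mul, mul_comm] at h

lemma Monotone.intervalIntegral_le_mul_sub {f : ℝ → ℝ} (hf : Monotone f) {u v : ℝ}
    (huv : u ≤ v) : ∫ t in u..v, f t ≤ f v * (v - u) := by
  have h := intervalIntegral.integral_mono_on huv (hf.intervalIntegrable (μ := volume))
    intervalIntegrable_const fun t ht => hf ht.2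
  rwa [intervalIntegral.integral_const, smul_eq_mul, mul_comm] at h

noncomputable def stdNormalPDF (s : ℝ) : ℝ := exp (-(s ^ 2) / 2) / √(2 * π)

lemma stdNormalPDF_eq_gaussianPDFReal : stdNormalPDF = gaussianPDFReal 0 1 := by
  ext s
  simp [stdNormalPDF, gaussianPDFReal, div_eq_inv_mul]

lemma stdNormalPDF_nonneg (s : ℝ) : 0 ≤ stdNormalPDF s := by
  rw [stdNormalPDF_eq_gaussianPDFReal]; exact gaussianPDFReal_nonneg _ _ _

lemma integrable_stdNormalPDF : Integrable stdNormalPDF := by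
  rw [stdNormalPDF_eq_gaussianPDFReal]; exact integrable_gaussianPDFReal _ _

lemma integral_stdNormalPDF : ∫ s, stdNormalPDF s = 1 := by
  rw [stdNormalPDF_eq_gaussianPDFReal]; exact integral_gaussianPDFReal_eq_one _ one_ne_zero

lemma continuous_stdNormalPDF : Continuous stdNormalPDF := by
  unfold stdNormalPDF; fun_prop

lemma stdNormalPDF_neg (s : ℝ) : stdNormalPDF (-s) = stdNormalPDF s := by
  simp [stdNormalPDF]

lemma hasDerivAt_stdNormalPDF (s : ℝ) : HasDerivAt stdNormalPDF (-s * stdNormalPDF s) s := by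
  have h : HasDerivAt (fun u : ℝ => -(u ^ 2) / 2) (-s) s :=
    ((hasDerivAt_pow 2 s).fun_neg.div_const 2).congr_deriv (by norm_num; ring)
  exact (h.exp.div_const √(2 * π)).congr_deriv (by rw [stdNormalPDF]; ring)

lemma tendsto_stdNormalPDF_cocompact : Tendsto stdNormalPDF (cocompact ℝ) (𝓝 0) := by
  have h := (tendsto_rpow_abs_mul_exp_neg_mul_sq_cocompact
    (by norm_num : (0 : ℝ) < 1 / 2) 0).div_const √(2 * π)
  rw [zero_div] at h
  refine h.congr fun s => ?_
  simp only [rpow_zero, one_mul, stdNormalPDF]; ring_nf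

lemma stdNormalPDF_le_exp (s : ℝ) : stdNormalPDF s ≤ exp s := by
  have hsqrt : exp (1 / 2) ≤ √(2 * π) := by
    rw [exp_half]
    exact sqrt_le_sqrt (by linarith [exp_one_lt_d9, pi_gt_three])
  rw [stdNormalPDF, div_le_iff₀ (by positivity)]
  calc exp (-(s ^ 2) / 2) ≤ exp s * exp (1 / 2) := by
        rw [← exp_add]; gcongr; nlinarith [sq_nonneg (s + 1)]
    _ ≤ exp s * √(2 * π) := by gcongr

lemma stdNormalCDF_eq_integral (t : ℝ) : stdNormalCDF t = ∫ s in Iic t, stdNormalPDF s := rfl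

lemma stdNormalCDF_nonneg (t : ℝ) : 0 ≤ stdNormalCDF t :=
  setIntegral_nonneg measurableSet_Iic fun s _ => stdNormalPDF_nonneg s

lemma monotone_stdNormalCDF : Monotone stdNormalCDF := fun _ _ h =>
  setIntegral_mono_set integrable_stdNormalPDF.integrableOn
    (.of_forall stdNormalPDF_nonneg) (Iic_subset_Iic.2 h).eventuallyLE

lemma stdNormalCDF_le_exp (t : ℝ) : stdNormalCDF t ≤ exp t := by
  rw [stdNormalCDF_eq_integral, ← integral_exp_Iic t]
  exact setIntegral_mono_on integrable_stdNormalPDF.integrableOn (integrableOn_exp_Iic t)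
    measurableSet_Iic fun s _ => stdNormalPDF_le_exp s

lemma hasDerivAt_stdNormalCDF (t : ℝ) : HasDerivAt stdNormalCDF (stdNormalPDF t) t := by
  have h : stdNormalCDF = fun u => stdNormalCDF 0 + ∫ s in (0 : ℝ)..u, stdNormalPDF s := by
    ext u
    rw [← intervalIntegral.integral_Iic_sub_Iic integrable_stdNormalPDF.integrableOn
      integrable_stdNormalPDF.integrableOn]
    simp only [stdNormalCDF_eq_integral]; ring
  rw [h]
  exact ((continuous_stdNormalPDF.integral_hasStrictDerivAt 0 t).hasDerivAt).const_add _

lemma continuous_stdNormalCDF : Continuous stdNormalCDF :=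
  continuous_iff_continuousAt.2 fun t => (hasDerivAt_stdNormalCDF t).continuousAt

lemma integral_Ioi_stdNormalPDF (c : ℝ) : ∫ s in Ioi c, stdNormalPDF s = stdNormalCDF (-c) := by
  simp_rw [stdNormalCDF_eq_integral, ← integral_comp_neg_Ioi, stdNormalPDF_neg]

lemma stdNormalCDF_neg (t : ℝ) : stdNormalCDF (-t) = 1 - stdNormalCDF t := by
  rw [← integral_Ioi_stdNormalPDF, ← integral_stdNormalPDF, stdNormalCDF_eq_integral,
    ← intervalIntegral.integral_Iic_add_Ioi integrable_stdNormalPDF.integrableOn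
      integrable_stdNormalPDF.integrableOn]
  ring

lemma integrable_mul_stdNormalPDF : Integrable fun s => s * stdNormalPDF s := by
  refine ((integrable_mul_exp_neg_mul_sq (by norm_num : (0 : ℝ) < 1 / 2)).div_const
    √(2 * π)).congr (.of_forall fun s => ?_)
  simp only [stdNormalPDF]; ring_nf

lemma integral_Ioi_mul_stdNormalPDF (c : ℝ) :
    ∫ s in Ioi c, s * stdNormalPDF s = stdNormalPDF c := by
  have h := integral_Ioi_of_hasDerivAt_of_tendsto' (a := c) (m := 0)
    (f := fun s => -stdNormalPDF s)
    (fun s _ => (hasDerivAt_stdNormalPDF s).neg.congr_deriv (by ring))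
    integrable_mul_stdNormalPDF.integrableOn
    (by simpa using (tendsto_stdNormalPDF_cocompact.mono_left atTop_le_cocompact).neg)
  simpa using h

/-- The closed form of `E[max (y + Z) 0]` for a standard normal `Z`. -/
noncomputable def stdNormalPlusExp (y : ℝ) : ℝ := y * stdNormalCDF y + stdNormalPDF y

lemma integral_max_add_mul_stdNormalPDF (y : ℝ) :
    ∫ u, max (y + u) 0 * stdNormalPDF u = stdNormalPlusExp y := by
  have h_ind : (fun u => max (y + u) 0 * stdNormalPDF u)
      = (Ioi (-y)).indicator fun u => y * stdNormalPDF u + u * stdNormalPDF u := by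
    ext u
    by_cases hu : u ∈ Ioi (-y)
    · rw [indicator_of_mem hu, max_eq_left (by linarith [mem_Ioi.1 hu])]; ring
    · rw [indicator_of_notMem hu, max_eq_right (by linarith [notMem_Ioi.1 hu]), zero_mul]
  rw [h_ind, integral_indicator measurableSet_Ioi,
    integral_add (integrable_stdNormalPDF.const_mul y).integrableOn
      integrable_mul_stdNormalPDF.integrableOn,
    integral_const_mul, integral_Ioi_stdNormalPDF, integral_Ioi_mul_stdNormalPDF, neg_neg,
    stdNormalPDF_neg, stdNormalPlusExp]

lemma hasDerivAt_stdNormalPlusExp (y : ℝ) :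
    HasDerivAt stdNormalPlusExp (stdNormalCDF y) y :=
  (((hasDerivAt_id y).mul (hasDerivAt_stdNormalCDF y)).add
    (hasDerivAt_stdNormalPDF y)).congr_deriv (by simp)

lemma tendsto_stdNormalPlusExp_atBot : Tendsto stdNormalPlusExp atBot (𝓝 0) := by
  have h_exp : Tendsto (fun y => y * exp y) atBot (𝓝 0) := by
    have := ((tendsto_pow_mul_exp_neg_atTop_nhds_zero 1).comp tendsto_neg_atBot_atTop).neg
    simpa using this
  have h_cdf : Tendsto (fun y => y * stdNormalCDF y) atBot (𝓝 0) := by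
    refine tendsto_of_tendsto_of_tendsto_of_le_of_le' h_exp tendsto_const_nhds ?_ ?_
    · filter_upwards [eventually_le_atBot 0] with y hy
      exact mul_le_mul_of_nonpos_left (stdNormalCDF_le_exp y) hy
    · filter_upwards [eventually_le_atBot 0] with y hy
      exact mul_nonpos_of_nonpos_of_nonneg hy (stdNormalCDF_nonneg y)
  have h := h_cdf.add (tendsto_stdNormalPDF_cocompact.mono_left atBot_le_cocompact)
  rwa [zero_add] at h

lemma stdNormalPlusExp_sub_self (y : ℝ) : stdNormalPlusExp y - y = stdNormalPlusExp (-y) := by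
  simp only [stdNormalPlusExp, stdNormalCDF_neg, stdNormalPDF_neg]; ring

section Scaled

variable {a : ℝ}

lemma gaussPlusExp_eq (ha : 0 < a) (x : ℝ) :
    gaussPlusExp a x = a⁻¹ * stdNormalPlusExp (a * x) := by
  have h : ∀ ν : ℝ, max (x + ν) 0 * (a / √(2 * π) * exp (-(a ^ 2 * ν ^ 2) / 2))
      = max (a * x + a * ν) 0 * stdNormalPDF (a * ν) := fun ν => by
    have h_max : a * max (x + ν) 0 = max (a * x + a * ν) 0 := by
      rw [mul_max_of_nonneg _ _ ha.le, mul_zero, mul_add]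
    rw [← h_max, stdNormalPDF, mul_pow]; ring
  simp_rw [gaussPlusExp, h]
  rw [Measure.integral_comp_mul_left (fun u => max (a * x + u) 0 * stdNormalPDF u),
    integral_max_add_mul_stdNormalPDF, abs_of_pos (inv_pos.2 ha), smul_eq_mul]

lemma integrableOn_stdNormalCDF_mul_Iic (ha : 0 < a) (b : ℝ) :
    IntegrableOn (fun t => stdNormalCDF (a * t)) (Iic b) :=
  (integrableOn_exp_mul_Iic ha b).mono'
    (continuous_stdNormalCDF.comp (continuous_const_mul a)).aestronglyMeasurable
    (.of_forall fun t => by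
      rw [norm_of_nonneg (stdNormalCDF_nonneg _)]; exact stdNormalCDF_le_exp _)

lemma integral_Iic_stdNormalCDF_mul (ha : 0 < a) (b : ℝ) :
    ∫ t in Iic b, stdNormalCDF (a * t) = a⁻¹ * stdNormalPlusExp (a * b) := by
  have h := integral_Iic_of_hasDerivAt_of_tendsto' (m := 0)
    (f := fun t => a⁻¹ * stdNormalPlusExp (a * t)) (fun t _ => ?_)
    (integrableOn_stdNormalCDF_mul_Iic ha b) ?_
  · rwa [sub_zero] at h
  · exact (((hasDerivAt_stdNormalPlusExp (a * t)).comp t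
      ((hasDerivAt_id t).const_mul a)).const_mul a⁻¹).congr_deriv (by field_simp)
  · simpa using (tendsto_stdNormalPlusExp_atBot.comp
      (tendsto_id.const_mul_atBot ha)).const_mul a⁻¹

lemma gaussPlusExp_sub_self (ha : 0 < a) (x : ℝ) :
    gaussPlusExp a x - x = ∫ t in Iic (-x), stdNormalCDF (a * t) := by
  rw [gaussPlusExp_eq ha, integral_Iic_stdNormalCDF_mul ha, mul_neg,
    ← stdNormalPlusExp_sub_self]
  field_simp

end Scaled

/-- For `ν ~ N(0, a⁻²)`: `E[max (x+ν) 0] - x = ∫_{-∞}^{-x} Φ(at) dt`; hence for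
`x₁ ≤ xₙ` the bias difference equals `∫_{-xₙ}^{-x₁} Φ(at) dt`, which lies in
`[Φ(-a xₙ)(xₙ - x₁), Φ(-a x₁)(xₙ - x₁)]`. -/
theorem stmt15 (a x1 xn : ℝ) (ha : 0 < a) (hx : x1 ≤ xn) :
    (∀ x : ℝ, gaussPlusExp a x - x = ∫ t in Set.Iic (-x), stdNormalCDF (a * t)) ∧
    ((gaussPlusExp a x1 - x1) - (gaussPlusExp a xn - xn)
        = ∫ t in (-xn)..(-x1), stdNormalCDF (a * t)) ∧
    stdNormalCDF (-(a * xn)) * (xn - x1) ≤ (∫ t in (-xn)..(-x1), stdNormalCDF (a * t)) ∧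
    (∫ t in (-xn)..(-x1), stdNormalCDF (a * t)) ≤ stdNormalCDF (-(a * x1)) * (xn - x1) := by
  have h_mono : Monotone fun t => stdNormalCDF (a * t) :=
    monotone_stdNormalCDF.comp fun _ _ h => mul_le_mul_of_nonneg_left h ha.le
  have h_le : -xn ≤ -x1 := neg_le_neg hx
  have h_len : -x1 - -xn = xn - x1 := by ring
  refine ⟨gaussPlusExp_sub_self ha, ?_, ?_, ?_⟩
  · rw [gaussPlusExp_sub_self ha, gaussPlusExp_sub_self ha,
      intervalIntegral.integral_Iic_sub_Iic (integrableOn_stdNormalCDF_mul_Iic ha _)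
        (integrableOn_stdNormalCDF_mul_Iic ha _)]
  · simpa only [mul_neg, h_len] using h_mono.mul_sub_le_intervalIntegral h_le
  · simpa only [mul_neg, h_len] using h_mono.intervalIntegral_le_mul_sub h_le
end

section
/- Let w ∈ ℝⁿ with ∑ᵢ wᵢ = 1 and let v* be the Euclidean projection of w onto the probability simplex Δₙ. Then v* minimizes the ℓ₁ objective ‖v − w‖₁ over v ∈ Δₙ, with minimal value ‖w‖₁ − 1. Moreover, if w ≥ 0 then the minimum is 0 and v* = w. -/
/-!
The Euclidean projection `v` of `w` onto the simplex satisfies the variational inequality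
`⟪v - w, u - v⟫ ≥ 0` for all `u` in the simplex. Testing it against the vertices shows that
`v - w` is at least its `v`-weighted mean `c` everywhere, hence equal to `c` on the support of `v`;
since `∑ (v - w) = 0`, also `c ≤ 0`. So `0 < vᵢ ≤ wᵢ` on the support and
`|vᵢ - wᵢ| = |wᵢ| - vᵢ` for every `i`, giving `‖v - w‖₁ = ‖w‖₁ - 1`, while the triangle
inequality gives `‖u - w‖₁ ≥ ‖w‖₁ - ∑ u = ‖w‖₁ - 1` for every `u` in the simplex.
-/

open Finset

variable {ι : Type*} [Fintype ι]

theorem sum_abs_sub_sum_le_sum_abs_sub {u : ι → ℝ} (hu : ∀ i, 0 ≤ u i) (w : ι → ℝ) :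
    ∑ i, |w i| - ∑ i, u i ≤ ∑ i, |u i - w i| := by
  rw [← sum_sub_distrib]
  refine sum_le_sum fun i _ => ?_
  have := abs_sub_abs_le_abs_sub (w i) (u i)
  rw [abs_of_nonneg (hu i), abs_sub_comm] at this
  exact this

theorem sum_mul_sub_nonneg_of_isMinOn {K : Set (ι → ℝ)} (hK : Convex ℝ K) {w v u : ι → ℝ}
    (hmin : IsMinOn (fun u => ∑ i, (u i - w i) ^ 2) K v) (hv : v ∈ K) (hu : u ∈ K) :
    0 ≤ ∑ i, (v i - w i) * (u i - v i) := by
  set S := ∑ i, (v i - w i) * (u i - v i)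
  set Q := ∑ i, (u i - v i) ^ 2
  have along_segment : ∀ t, 0 < t → t ≤ 1 → 0 ≤ 2 * S + t * Q := by
    intro t ht0 ht1
    have hle := isMinOn_iff.1 hmin _ (hK.add_smul_sub_mem hv hu ⟨ht0.le, ht1⟩)
    have expand : ∑ i, ((v + t • (u - v)) i - w i) ^ 2
        = ∑ i, (v i - w i) ^ 2 + t * (2 * S + t * Q) := by
      simp only [S, Q, mul_sum, ← sum_add_distrib]
      refine sum_congr rfl fun i _ => ?_
      simp only [Pi.add_apply, Pi.smul_apply, Pi.sub_apply, smul_eq_mul]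
      ring
    simp only [expand] at hle
    exact nonneg_of_mul_nonneg_right (by linarith) ht0
  by_contra! hS
  have hQ : 0 ≤ Q := sum_nonneg fun i _ => sq_nonneg _
  -- `t = -S / (Q - S)` makes `t * Q ≤ -S`, so the first-order term dominates.
  have ht0 : 0 < -S / (Q - S) := div_pos (by linarith) (by linarith)
  have ht1 : -S / (Q - S) ≤ 1 := (div_le_one (by linarith)).2 (by linarith)
  have htQ : -S / (Q - S) * Q ≤ -S := by
    rw [div_mul_eq_mul_div, div_le_iff₀ (by linarith)]
    nlinarith
  linarith [along_segment _ ht0 ht1]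

section Simplex

variable {w v : ι → ℝ} (hmin : IsMinOn (fun u => ∑ i, (u i - w i) ^ 2) (stdSimplex ℝ ι) v)
  (hv : v ∈ stdSimplex ℝ ι)
include hmin hv

theorem sum_mul_sub_le_of_isMinOn_stdSimplex (j : ι) :
    ∑ i, v i * (v i - w i) ≤ v j - w j := by
  classical
  have h := sum_mul_sub_nonneg_of_isMinOn (convex_stdSimplex ℝ ι) hmin hv
    (single_mem_stdSimplex ℝ j)
  have hvertex : ∑ i, (v i - w i) * ((Pi.single j 1 : ι → ℝ) i - v i)
      = v j - w j - ∑ i, v i * (v i - w i) := by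
    simp only [Pi.single_apply, mul_sub, mul_ite, mul_one, mul_zero, mul_comm, sum_sub_distrib,
      sum_ite_eq', mem_univ, ↓reduceIte]
  linarith

theorem sub_eq_sum_mul_sub_of_isMinOn_stdSimplex {k : ι} (hk : 0 < v k) :
    v k - w k = ∑ i, v i * (v i - w i) := by
  set c := ∑ i, v i * (v i - w i)
  have hc := sum_mul_sub_le_of_isMinOn_stdSimplex hmin hv
  have hzero : ∑ i, v i * (v i - w i - c) = 0 := by
    simp only [mul_sub, sum_sub_distrib, ← sum_mul, hv.2, one_mul, c, sub_self]
  have hk0 := (sum_eq_zero_iff_of_nonneg fun i _ =>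
    mul_nonneg (hv.1 i) (sub_nonneg.2 (hc i))).1 hzero k (mem_univ k)
  linarith [(mul_eq_zero.1 hk0).resolve_left hk.ne']

theorem le_of_isMinOn_stdSimplex (hw : ∑ i, w i = 1) {k : ι} (hk : 0 < v k) : v k ≤ w k := by
  have hsum : ∑ i, (v i - w i) ≤ ∑ _i : ι, (0 : ℝ) := by
    rw [sum_sub_distrib, hv.2, hw, sub_self, sum_const_zero]
  obtain ⟨j, -, hj⟩ := exists_le_of_sum_le (univ_nonempty_iff.2 ⟨k⟩) hsum
  linarith [sub_eq_sum_mul_sub_of_isMinOn_stdSimplex hmin hv hk,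
    sum_mul_sub_le_of_isMinOn_stdSimplex hmin hv j]

theorem sum_abs_sub_of_isMinOn_stdSimplex (hw : ∑ i, w i = 1) :
    ∑ i, |v i - w i| = ∑ i, |w i| - 1 := by
  have habs : ∀ i, |v i - w i| = |w i| - v i := by
    intro i
    rcases (hv.1 i).lt_or_eq with hpos | hzero
    · have hle := le_of_isMinOn_stdSimplex hmin hv hw hpos
      rw [abs_of_nonpos (by linarith), abs_of_pos (by linarith)]
      ring
    · simp [← hzero]
  rw [sum_congr rfl fun i _ => habs i, sum_sub_distrib, hv.2]

end Simplex

/-- The Euclidean projection `v` of `w` (with `∑ w = 1`) onto the probability simplex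
minimizes the ℓ₁ objective `‖u - w‖₁` over the simplex, with minimal value
`‖w‖₁ - 1`; moreover if `w ≥ 0` then the minimum is `0` and `v = w`. -/
theorem stmt19 (n : ℕ) (w v : Fin n → ℝ) (hw : ∑ i, w i = 1)
    (hv0 : ∀ i, 0 ≤ v i) (hv1 : ∑ i, v i = 1)
    (hmin : ∀ u : Fin n → ℝ, (∀ i, 0 ≤ u i) → ∑ i, u i = 1 →
      ∑ i, (v i - w i) ^ 2 ≤ ∑ i, (u i - w i) ^ 2) :
    (∀ u : Fin n → ℝ, (∀ i, 0 ≤ u i) → ∑ i, u i = 1 →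
      ∑ i, |v i - w i| ≤ ∑ i, |u i - w i|) ∧
    (∑ i, |v i - w i| = ∑ i, |w i| - 1) ∧
    ((∀ i, 0 ≤ w i) → (∑ i, |v i - w i| = 0 ∧ v = w)) := by
  have hproj : IsMinOn (fun u => ∑ i, (u i - w i) ^ 2) (stdSimplex ℝ (Fin n)) v :=
    isMinOn_iff.2 fun u hu => hmin u hu.1 hu.2
  have hval := sum_abs_sub_of_isMinOn_stdSimplex hproj ⟨hv0, hv1⟩ hw
  refine ⟨fun u hu0 hu1 => ?_, hval, fun hw0 => ?_⟩
  · rw [hval, ← hu1]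
    exact sum_abs_sub_sum_le_sum_abs_sub hu0 w
  · have hzero : ∑ i, |v i - w i| = 0 := by
      rw [hval, sum_congr rfl fun i _ => abs_of_nonneg (hw0 i), hw, sub_self]
    refine ⟨hzero, funext fun i => sub_eq_zero.1 (abs_eq_zero.1 ?_)⟩
    exact (sum_eq_zero_iff_of_nonneg fun i _ => abs_nonneg _).1 hzero i (mem_univ i)
end
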